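/- Let a, b, c be complex numbers. The determinant of the 4×4 matrix M = [[1, *, *, *], [0, m_{21}(a;b,c), m_{21}(b;a,c), m_{21}(c;a,b)], [0, (1/6)(2 - 5a + 2b + 2c), (1/6)(2 + 2a - 5b + 2c), (1/6)(2 + 2a + 2b - 5c)], [0, -1/6, -1/6, -1/6]], where m_{21}(u；v,w) = (1/6)(5u - 5u^2 - 3v + 5uv - 3w + 5uw - 3vw) and the entries * are arbitrary, equals -(91/216)(a - b)(a - c)(b - c). In particular, M is invertible whenever a, b, c are pairwise distinct. -/
import Mathlib


open Matrix

/-- The entry `m₂₁(u; v, w)` of the Gauss–Manin matrix of Section 6. -/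
noncomputable def m21 (u v w : ℂ) : ℂ :=
  (1 / 6) * (5 * u - 5 * u ^ 2 - 3 * v + 5 * u * v - 3 * w + 5 * u * w - 3 * v * w)

/-- The entry `m₃₁(u; v, w)` of the Gauss–Manin matrix of Section 6. -/
noncomputable def m31 (u v w : ℂ) : ℂ := (1 / 6) * (2 - 5 * u + 2 * v + 2 * w)

/-- The matrix `M` of Section 6 (with arbitrary entries `s₁ s₂ s₃` in the first row)
has determinant `-(91/216)(a-b)(a-c)(b-c)`; in particular it is invertible
whenever `a, b, c` are pairwise distinct. -/
theorem stmt12 (a b c : ℂ) (s₁ s₂ s₃ : ℂ) :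
    (!![1, s₁, s₂, s₃;
        0, m21 a b c, m21 b a c, m21 c a b;
        0, m31 a b c, m31 b a c, m31 c a b;
        0, -1/6, -1/6, -1/6] : Matrix (Fin 4) (Fin 4) ℂ).det
      = -(91 / 216) * (a - b) * (a - c) * (b - c) ∧
    (a ≠ b → a ≠ c → b ≠ c →
      IsUnit (!![1, s₁, s₂, s₃;
        0, m21 a b c, m21 b a c, m21 c a b;
        0, m31 a b c, m31 b a c, m31 c a b;
        0, -1/6, -1/6, -1/6] : Matrix (Fin 4) (Fin 4) ℂ)) := by
  have hdet : (!![1, s₁, s₂, s₃;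
        0, m21 a b c, m21 b a c, m21 c a b;
        0, m31 a b c, m31 b a c, m31 c a b;
        0, -1/6, -1/6, -1/6] : Matrix (Fin 4) (Fin 4) ℂ).det
      = -(91 / 216) * (a - b) * (a - c) * (b - c) := by
    simp [Matrix.det_succ_row_zero, Fin.sum_univ_succ, m21, m31]
    ring
  refine ⟨hdet, fun hab hac hbc => ?_⟩
  rw [Matrix.isUnit_iff_isUnit_det, hdet, isUnit_iff_ne_zero]
  have : (91 / 216 : ℂ) ≠ 0 := by norm_num
  simp [sub_eq_zero, hab, hac, hbc, this]
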